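/- Suppose a single-coalition-first action model is z-represented by a single-coalition-first neighborhood model on the same states, i.e. AE_C(s) = nei_C(s) for every coalition C and state s. Then: the action model is serial if and only if the neighborhood model is serial; the action model is independent if and only if the neighborhood model is independent; and the action model is deterministic if and only if the neighborhood model is deterministic. -/
import Mathlib


/-- `Δ` is a cover of `X` if `⋃ Δ = X` and `∅ ∉ Δ`. -/
def IsCover {S : Type} (Δ : Set (Set S)) (X : Set S) : Prop :=
  ⋃₀ Δ = X ∧ ∅ ∉ Δ

/-- Restriction of a joint action of `C` to a subcoalition `D ⊆ C`. -/
def restr {AG Ac : Type} {C D : Set AG} (h : D ⊆ C) (σ : ↥C → Ac) : ↥D → Ac :=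
  fun a => σ ⟨a.1, h a.2⟩

open Classical in
/-- The common extension `σC ∪ σD` of joint actions of (disjoint) coalitions. -/
noncomputable def unionJA {AG Ac : Type} {C D : Set AG}
    (σC : ↥C → Ac) (σD : ↥D → Ac) : ↥(C ∪ D) → Ac :=
  fun a =>
    if h : a.1 ∈ C then σC ⟨a.1, h⟩
    else σD ⟨a.1, ((Set.mem_union _ _ _).mp a.2).resolve_left h⟩

open Classical in
/-- The derived outcome function of a single-coalition-first action model. -/
noncomputable def sOut {AG S Ac : Type} (suc : S → Set S)
    (outa : (a : AG) → S → (↥({a} : Set AG) → Ac) → Set S)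
    (C : Set AG) (s : S) (σ : ↥C → Ac) : Set S :=
  if C.Nonempty then
    ⋂ a : ↥C, outa a.1 s (restr (Set.singleton_subset_iff.mpr a.2) σ)
  else suc s

open Classical in
/-- The derived neighborhood functions of a single-coalition-first
neighborhood model. -/
noncomputable def dNei {AG S : Type} (suc : S → Set S)
    (nei : AG → S → Set (Set S)) (C : Set AG) (s : S) : Set (Set S) :=
  if suc s = ∅ then ∅
  else if C = ∅ then {suc s}
  else {Y : Set S | Y.Nonempty ∧
    ∃ X : ↥C → Set S, (∀ a : ↥C, X a ∈ nei a.1 s) ∧ Y = ⋂ a : ↥C, X a}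

lemma mem_sOut {AG S Ac : Type} {sucA : S → Set S}
    {outa : (a : AG) → S → (↥({a} : Set AG) → Ac) → Set S}
    (houta : ∀ (a : AG) (s : S),
      ⋃₀ {Y : Set S | ∃ σ : ↥({a} : Set AG) → Ac, Y = outa a s σ} = sucA s)
    {C : Set AG} {s : S} {σ : ↥C → Ac} {x : S} :
    x ∈ sOut sucA outa C s σ ↔
      x ∈ sucA s ∧ ∀ a : ↥C,
        x ∈ outa a.1 s (restr (Set.singleton_subset_iff.mpr a.2) σ) := by
  have hsub : ∀ (a : AG) (τ : ↥({a} : Set AG) → Ac), outa a s τ ⊆ sucA s := by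
    intro a τ
    rw [← houta a s]
    exact Set.subset_sUnion_of_mem ⟨τ, rfl⟩
  unfold sOut
  split_ifs with h
  · constructor
    · intro hx
      have h2 : ∀ a : ↥C, x ∈ outa a.1 s (restr (Set.singleton_subset_iff.mpr a.2) σ) :=
        fun a => Set.mem_iInter.mp hx a
      obtain ⟨a, ha⟩ := h
      exact ⟨hsub _ _ (h2 ⟨a, ha⟩), h2⟩
    · exact fun ⟨_, h2⟩ => Set.mem_iInter.mpr h2
  · rw [Set.not_nonempty_iff_eq_empty] at h
    subst h
    simp

lemma sOut_union {AG S Ac : Type} {sucA : S → Set S}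
    {outa : (a : AG) → S → (↥({a} : Set AG) → Ac) → Set S}
    (houta : ∀ (a : AG) (s : S),
      ⋃₀ {Y : Set S | ∃ σ : ↥({a} : Set AG) → Ac, Y = outa a s σ} = sucA s)
    {C D : Set AG} (hCD : Disjoint C D) (s : S) (σC : ↥C → Ac) (σD : ↥D → Ac) :
    sOut sucA outa (C ∪ D) s (unionJA σC σD) =
      sOut sucA outa C s σC ∩ sOut sucA outa D s σD := by
  have hC : ∀ (a : ↥(C ∪ D)) (ha : a.1 ∈ C),
      outa a.1 s (restr (Set.singleton_subset_iff.mpr a.2) (unionJA σC σD)) =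
      outa a.1 s (restr (Set.singleton_subset_iff.mpr ha) σC) := by
    intro a ha
    refine congrArg _ (funext fun b => ?_)
    have hb : b.1 = a.1 := b.2
    simp only [restr, unionJA]
    rw [dif_pos (show b.1 ∈ C by rw [hb]; exact ha)]
  have hD : ∀ (a : ↥(C ∪ D)) (ha : a.1 ∈ D),
      outa a.1 s (restr (Set.singleton_subset_iff.mpr a.2) (unionJA σC σD)) =
      outa a.1 s (restr (Set.singleton_subset_iff.mpr ha) σD) := by
    intro a ha
    refine congrArg _ (funext fun b => ?_)
    have hb : b.1 = a.1 := b.2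
    have hnc : b.1 ∉ C := fun hc => hCD.ne_of_mem hc ha hb
    simp only [restr, unionJA]
    rw [dif_neg hnc]
  ext x
  simp only [Set.mem_inter_iff, mem_sOut houta]
  constructor
  · rintro ⟨hx, h⟩
    refine ⟨⟨hx, fun a => ?_⟩, ⟨hx, fun a => ?_⟩⟩
    · have := h ⟨a.1, Or.inl a.2⟩
      rwa [hC ⟨a.1, Or.inl a.2⟩ a.2] at this
    · have := h ⟨a.1, Or.inr a.2⟩
      rwa [hD ⟨a.1, Or.inr a.2⟩ a.2] at this
  · rintro ⟨⟨hx, h1⟩, ⟨_, h2⟩⟩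
    refine ⟨hx, fun a => ?_⟩
    rcases a.2 with ha | ha
    · rw [hC a ha]; exact h1 ⟨a.1, ha⟩
    · rw [hD a ha]; exact h2 ⟨a.1, ha⟩

/-- If a single-coalition-first action model is z-represented by a
single-coalition-first neighborhood model on the same states (its actual
effectivity functions coincide with the derived neighborhood functions), then
the action model is serial/independent/deterministic if and only if the
neighborhood model is, respectively. -/
theorem z_representation_preserves_SID
    {AG S Ac : Type} [Fintype AG] [Nonempty AG] [Nonempty S] [Nonempty Ac]
    (sucA : S → Set S)
    (outa : (a : AG) → S → (↥({a} : Set AG) → Ac) → Set S)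
    (houta : ∀ (a : AG) (s : S),
      ⋃₀ {Y : Set S | ∃ σ : ↥({a} : Set AG) → Ac, Y = outa a s σ} = sucA s)
    (sucN : S → Set S) (nei : AG → S → Set (Set S))
    (hnei : ∀ (a : AG) (s : S), IsCover (nei a s) (sucN s))
    (hrep : ∀ (C : Set AG) (s : S),
      {Y : Set S | ∃ σ : ↥C → Ac, Y = sOut sucA outa C s σ ∧ Y ≠ ∅} =
        dNei sucN nei C s) :
    -- seriality
    ((∀ (C : Set AG) (s : S), ∃ σ : ↥C → Ac, sOut sucA outa C s σ ≠ ∅) ↔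
      (∀ (C : Set AG) (s : S), dNei sucN nei C s ≠ ∅)) ∧
    -- independence
    ((∀ (s : S) (C D : Set AG), Disjoint C D → ∀ (σC : ↥C → Ac) (σD : ↥D → Ac),
        sOut sucA outa C s σC ≠ ∅ → sOut sucA outa D s σD ≠ ∅ →
        sOut sucA outa (C ∪ D) s (unionJA σC σD) ≠ ∅) ↔
      (∀ (s : S) (C D : Set AG), Disjoint C D →
        ∀ Y₁ ∈ dNei sucN nei C s, ∀ Y₂ ∈ dNei sucN nei D s, Y₁ ∩ Y₂ ≠ ∅)) ∧
    -- determinism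
    ((∀ (s : S) (σ : ↥(Set.univ : Set AG) → Ac),
        sOut sucA outa Set.univ s σ ≠ ∅ →
        ∃ t : S, sOut sucA outa Set.univ s σ = {t}) ↔
      (∀ (s : S), ∀ Y ∈ dNei sucN nei (Set.univ : Set AG) s,
        ∃ t : S, Y = {t})) := by
  refine ⟨⟨?_, ?_⟩, ⟨?_, ?_⟩, ⟨?_, ?_⟩⟩
  · intro h C s
    obtain ⟨σ, hσ⟩ := h C s
    have mem : sOut sucA outa C s σ ∈ dNei sucN nei C s := by
      rw [← hrep]; exact ⟨σ, rfl, hσ⟩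
    exact Set.nonempty_iff_ne_empty.mp ⟨_, mem⟩
  · intro h C s
    obtain ⟨Y, hY⟩ := Set.nonempty_iff_ne_empty.mpr (h C s)
    rw [← hrep] at hY
    obtain ⟨σ, rfl, hne⟩ := hY
    exact ⟨σ, hne⟩
  · intro h s C D hdisj Y₁ hY₁ Y₂ hY₂
    rw [← hrep] at hY₁ hY₂
    obtain ⟨σC, rfl, h1⟩ := hY₁
    obtain ⟨σD, rfl, h2⟩ := hY₂
    have := h s C D hdisj σC σD h1 h2
    rwa [sOut_union houta hdisj] at this
  · intro h s C D hdisj σC σD h1 h2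
    rw [sOut_union houta hdisj]
    exact h s C D hdisj _ (hrep C s ▸ ⟨σC, rfl, h1⟩) _ (hrep D s ▸ ⟨σD, rfl, h2⟩)
  · intro h s Y hY
    rw [← hrep] at hY
    obtain ⟨σ, rfl, hne⟩ := hY
    exact h s σ hne
  · intro h s σ hσ
    exact h s _ (hrep _ s ▸ ⟨σ, rfl, hσ⟩)
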